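/- Let \alpha > 2, \delta = 2/\alpha, \theta > 0 and c^* > 0. Set \tilde{c} = \min\{2(1-\delta)/\delta, c^*\} and suppose \theta/\tilde{c} < \min\{1/2, (1 - \theta\delta/(1-\delta))/(1+\theta)\}. Define A(c) = \delta \int_0^1 c u^{-\delta}/(1+cu) du, c_2(\beta_1) = \theta/(1 - \beta_1(1+\theta)), M(\beta_1) = 2/(2 + 3 A(c_2(\beta_1)) + A(c_2(\beta_1))^2), and the feasible set S = \{\beta_1 : \theta/\tilde{c} < \beta_1 < \min\{1/2, (1-\theta\delta/(1-\delta))/(1+\theta)\}\}. Then S is nonempty, M is strictly decreasing on S, and \sup_{\beta_1 \in S} M(\beta_1) = M(\theta/\tilde{c}); i.e., the optimal power allocation is \beta_1^* = \theta/\min\{2(1-\delta)/\delta, c^*\} and \beta_2^* = 1 - \beta_1^*. -/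
import Mathlib


open MeasureTheory Filter Topology

/-- `A(c) = δ ∫₀¹ c u^(-δ)/(1 + c u) du` with `δ = 2/α`. -/
noncomputable def Afun (α c : ℝ) : ℝ :=
  (2 / α) * ∫ u in Set.Ioo (0 : ℝ) 1, c * u ^ (-(2 / α)) / (1 + c * u)

/-- `c₂(β₁) = θ/(1 - β₁(1+θ))`. -/
noncomputable def c2fun (θ β1 : ℝ) : ℝ := θ / (1 - β1 * (1 + θ))

/-- Mean success probability of the 2nd-rank user in two-user downlink NOMA. -/
noncomputable def M2fun (α θ β1 : ℝ) : ℝ :=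
  2 / (2 + 3 * Afun α (c2fun θ β1) + (Afun α (c2fun θ β1)) ^ 2)

lemma rpow_integrable {α : ℝ} (hα : 2 < α) :
    IntegrableOn (fun u : ℝ => u ^ (-(2/α))) (Set.Ioo 0 1) := by
  have hδ1 : 2/α < 1 := (div_lt_one (by linarith)).2 (by linarith)
  have h : (-1 : ℝ) < -(2/α) := by linarith
  have := intervalIntegral.intervalIntegrable_rpow' (a := 0) (b := 1) h
  rw [intervalIntegrable_iff, Set.uIoc_of_le (by norm_num : (0:ℝ) ≤ 1)] at this
  exact this.mono_set Set.Ioo_subset_Ioc_self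

lemma F_integrable {α : ℝ} (hα : 2 < α) {c : ℝ} (hc : 0 ≤ c) :
    IntegrableOn (fun u : ℝ => c * u ^ (-(2/α)) / (1 + c * u)) (Set.Ioo 0 1) := by
  have hb : IntegrableOn (fun u : ℝ => c * u ^ (-(2/α))) (Set.Ioo 0 1) :=
    (rpow_integrable hα).const_mul c
  have hmeas : AEStronglyMeasurable (fun u : ℝ => c * u ^ (-(2/α)) / (1 + c * u))
      (volume.restrict (Set.Ioo 0 1)) := by
    apply ContinuousOn.aestronglyMeasurable ?_ measurableSet_Ioo
    apply ContinuousOn.div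
    · exact continuousOn_const.mul (ContinuousOn.rpow_const continuousOn_id
        fun u hu => Or.inl (ne_of_gt hu.1))
    · exact continuousOn_const.add (continuousOn_const.mul continuousOn_id)
    · intro u hu
      have := mul_nonneg hc hu.1.le
      positivity
  refine hb.mono' hmeas ?_
  filter_upwards [ae_restrict_mem measurableSet_Ioo] with u hu
  have hp : (0:ℝ) < u ^ (-(2/α)) := Real.rpow_pos_of_pos hu.1 _
  have hd : (1:ℝ) ≤ 1 + c * u := by nlinarith [hu.1.le]
  rw [Real.norm_eq_abs, abs_of_nonneg (by positivity)]
  rw [div_le_iff₀ (by linarith)]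
  nlinarith [mul_nonneg (mul_nonneg hc hp.le) (mul_nonneg hc hu.1.le)]

lemma Afun_nonneg {α : ℝ} (hα : 2 < α) {c : ℝ} (hc : 0 ≤ c) : 0 ≤ Afun α c := by
  have hδ : 0 < 2/α := by positivity
  refine mul_nonneg hδ.le (setIntegral_nonneg measurableSet_Ioo fun u hu => ?_)
  have hp : (0:ℝ) < u ^ (-(2/α)) := Real.rpow_pos_of_pos hu.1 _
  have : (0:ℝ) < 1 + c * u := by nlinarith [hu.1.le]
  positivity

lemma Afun_strictMono {α : ℝ} (hα : 2 < α) {c c' : ℝ} (hc : 0 < c) (hcc : c < c') :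
    Afun α c < Afun α c' := by
  have hδ : 0 < 2/α := by positivity
  have hc' : 0 < c' := hc.trans hcc
  have hlt : ∀ u ∈ Set.Ioo (0:ℝ) 1,
      c * u ^ (-(2/α)) / (1 + c * u) < c' * u ^ (-(2/α)) / (1 + c' * u) := by
    intro u hu
    have hp : (0:ℝ) < u ^ (-(2/α)) := Real.rpow_pos_of_pos hu.1 _
    have hd1 : (0:ℝ) < 1 + c * u := by nlinarith [hu.1.le]
    have hd2 : (0:ℝ) < 1 + c' * u := by nlinarith [hu.1.le]
    rw [div_lt_div_iff₀ hd1 hd2]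
    nlinarith [mul_pos (mul_pos hc hc') (mul_pos hu.1 hp)]
  have hpos : 0 < ∫ u in Set.Ioo (0:ℝ) 1,
      (c' * u ^ (-(2/α)) / (1 + c' * u) - c * u ^ (-(2/α)) / (1 + c * u)) := by
    rw [setIntegral_pos_iff_support_of_nonneg_ae]
    · refine lt_of_lt_of_le ?_ (measure_mono (Set.subset_inter (fun u hu => ?_) Set.Subset.rfl))
      · simp [Real.volume_Ioo]
      · exact ne_of_gt (sub_pos.2 (hlt u hu))
    · filter_upwards [ae_restrict_mem measurableSet_Ioo] with u hu
      exact sub_nonneg.2 (hlt u hu).le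
    · exact (F_integrable hα hc'.le).sub (F_integrable hα hc.le)
  rw [integral_sub (F_integrable hα hc'.le) (F_integrable hα hc.le)] at hpos
  have := sub_pos.1 hpos
  exact mul_lt_mul_of_pos_left this hδ

lemma Afun_continuousAt {α : ℝ} (hα : 2 < α) {c0 : ℝ} (hc0 : 0 < c0) :
    ContinuousAt (Afun α) c0 := by
  apply ContinuousAt.mul continuousAt_const
  apply continuousAt_of_dominated (bound := fun u : ℝ => (c0 + 1) * u ^ (-(2/α)))
  · filter_upwards [eventually_gt_nhds hc0] with c hc
    exact (F_integrable hα hc.le).aestronglyMeasurable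
  · filter_upwards [eventually_gt_nhds hc0, eventually_lt_nhds (lt_add_one c0)] with c hc hc1
    filter_upwards [ae_restrict_mem measurableSet_Ioo] with u hu
    have hp : (0:ℝ) < u ^ (-(2/α)) := Real.rpow_pos_of_pos hu.1 _
    have hd : (1:ℝ) ≤ 1 + c * u := by nlinarith [hu.1.le]
    rw [Real.norm_eq_abs, abs_of_nonneg (by positivity), div_le_iff₀ (by linarith)]
    nlinarith [mul_le_mul_of_nonneg_right hc1.le hp.le,
      mul_nonneg (mul_nonneg (by linarith : (0:ℝ) ≤ c0+1) hp.le) (mul_nonneg hc.le hu.1.le)]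
  · exact (rpow_integrable hα).const_mul _
  · filter_upwards [ae_restrict_mem measurableSet_Ioo] with u hu
    have hd : (0:ℝ) < 1 + c0 * u := by nlinarith [hu.1.le]
    exact ((continuousAt_id.mul continuousAt_const).div
      (continuousAt_const.add (continuousAt_id.mul continuousAt_const)) (ne_of_gt hd))

/-- Two-user downlink NOMA power optimization with latency constraints (problem P2): with
`δ = 2/α`, `c̃ = min{2(1-δ)/δ, c*}`, if `θ/c̃ < min{1/2, (1-θδ/(1-δ))/(1+θ)}`, then the
feasible set `S = {β₁ : θ/c̃ < β₁ < min{1/2, (1-θδ/(1-δ))/(1+θ)}}` is nonempty, the objective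
`M` is strictly decreasing on `S`, and `sup_{β₁ ∈ S} M(β₁) = M(θ/c̃)`; i.e., the optimal
allocation is `β₁* = θ/min{2(1-δ)/δ, c*}` (and `β₂* = 1 - β₁*`). -/
theorem optimal_power_two_user_noma_P2
    (α θ cstar : ℝ) (hα : 2 < α) (hθ : 0 < θ) (hc : 0 < cstar)
    (hfeas : θ / min (2 * (1 - 2 / α) / (2 / α)) cstar <
      min (1 / 2) ((1 - θ * (2 / α) / (1 - 2 / α)) / (1 + θ))) :
    ({β1 : ℝ | θ / min (2 * (1 - 2 / α) / (2 / α)) cstar < β1 ∧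
        β1 < min (1 / 2) ((1 - θ * (2 / α) / (1 - 2 / α)) / (1 + θ))}).Nonempty ∧
      StrictAntiOn (M2fun α θ)
        {β1 : ℝ | θ / min (2 * (1 - 2 / α) / (2 / α)) cstar < β1 ∧
          β1 < min (1 / 2) ((1 - θ * (2 / α) / (1 - 2 / α)) / (1 + θ))} ∧
      sSup (M2fun α θ ''
          {β1 : ℝ | θ / min (2 * (1 - 2 / α) / (2 / α)) cstar < β1 ∧
            β1 < min (1 / 2) ((1 - θ * (2 / α) / (1 - 2 / α)) / (1 + θ))}) =
        M2fun α θ (θ / min (2 * (1 - 2 / α) / (2 / α)) cstar) := by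
  have hα0 : (0:ℝ) < α := by linarith
  have hδ0 : (0:ℝ) < 2/α := by positivity
  have hδ1 : 2/α < 1 := (div_lt_one hα0).2 (by linarith)
  set a : ℝ := θ / min (2 * (1 - 2 / α) / (2 / α)) cstar with ha_def
  set b : ℝ := min (1 / 2) ((1 - θ * (2 / α) / (1 - 2 / α)) / (1 + θ)) with hb_def
  have hct : 0 < min (2 * (1 - 2 / α) / (2 / α)) cstar :=
    lt_min (div_pos (by linarith) hδ0) hc
  have ha0 : 0 < a := div_pos hθ hct
  have hab : a < b := hfeas
  have hSIoo : {β1 : ℝ | a < β1 ∧ β1 < b} = Set.Ioo a b := rfl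
  -- key facts on Ico a b
  have hq : 0 < θ * (2 / α) / (1 - 2 / α) := by
    have : (0:ℝ) < 1 - 2/α := by linarith
    positivity
  have hden : ∀ x ∈ Set.Ico a b, θ * (2 / α) / (1 - 2 / α) < 1 - x * (1 + θ) := by
    intro x hx
    have hxb : x < (1 - θ * (2 / α) / (1 - 2 / α)) / (1 + θ) :=
      lt_of_lt_of_le hx.2 (min_le_right _ _)
    have h1θ : (0:ℝ) < 1 + θ := by linarith
    have := (lt_div_iff₀ h1θ).1 hxb
    linarith
  have hc2pos : ∀ x ∈ Set.Ico a b, 0 < c2fun θ x := by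
    intro x hx
    have := hden x hx
    exact div_pos hθ (by linarith)
  have hc2mono : ∀ x ∈ Set.Ico a b, ∀ y ∈ Set.Ico a b, x < y →
      c2fun θ x < c2fun θ y := by
    intro x hx y hy hxy
    have hdx := hden x hx
    have hdy := hden y hy
    have h1θ : (0:ℝ) < 1 + θ := by linarith
    have : 1 - y * (1 + θ) < 1 - x * (1 + θ) := by nlinarith
    exact div_lt_div_of_pos_left hθ (by linarith) this
  have hantiIco : StrictAntiOn (M2fun α θ) (Set.Ico a b) := by
    intro x hx y hy hxy
    have hcx := hc2pos x hx
    have hA : Afun α (c2fun θ x) < Afun α (c2fun θ y) :=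
      Afun_strictMono hα hcx (hc2mono x hx y hy hxy)
    have hA0 : 0 ≤ Afun α (c2fun θ x) := Afun_nonneg hα hcx.le
    unfold M2fun
    apply div_lt_div_of_pos_left (by norm_num) (by nlinarith) (by nlinarith)
  have haIco : a ∈ Set.Ico a b := ⟨le_refl a, hab⟩
  have hne : ({β1 : ℝ | a < β1 ∧ β1 < b}).Nonempty :=
    ⟨(a+b)/2, ⟨by linarith, by linarith⟩⟩
  refine ⟨hne, ?_, ?_⟩
  · rw [hSIoo]; exact hantiIco.mono Set.Ioo_subset_Ico_self
  · -- sSup part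
    rw [hSIoo]
    have hub : ∀ z ∈ M2fun α θ '' Set.Ioo a b, z ≤ M2fun α θ a := by
      rintro z ⟨x, hx, rfl⟩
      exact (hantiIco haIco (Set.Ioo_subset_Ico_self hx) hx.1).le
    have hbdd : BddAbove (M2fun α θ '' Set.Ioo a b) := ⟨_, hub⟩
    have hnei : (M2fun α θ '' Set.Ioo a b).Nonempty := hne.image _
    refine le_antisymm (csSup_le hnei hub) ?_
    -- continuity of M2fun at a
    have hda := hden a haIco
    have hc2cont : ContinuousAt (c2fun θ) a := by
      unfold c2fun
      exact continuousAt_const.div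
        (continuousAt_const.sub (continuousAt_id.mul continuousAt_const))
        (by dsimp; intro h; rw [h] at hda; linarith)
    have hAc : ContinuousAt (fun β => Afun α (c2fun θ β)) a :=
      (Afun_continuousAt hα (hc2pos a haIco)).comp hc2cont
    have hA0 : 0 ≤ Afun α (c2fun θ a) := Afun_nonneg hα (hc2pos a haIco).le
    have hMcont : ContinuousAt (M2fun α θ) a := by
      unfold M2fun
      exact continuousAt_const.div
        ((continuousAt_const.add (continuousAt_const.mul hAc)).add (hAc.pow 2))
        (by nlinarith)
    haveI hNB : (𝓝[Set.Ioo a b] a).NeBot := by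
      refine mem_closure_iff_nhdsWithin_neBot.1 ?_
      rw [closure_Ioo (ne_of_lt hab)]
      exact ⟨le_refl a, hab.le⟩
    refine le_of_tendsto ((hMcont.continuousWithinAt (s := Set.Ioo a b)).tendsto) ?_
    filter_upwards [self_mem_nhdsWithin] with x hx
    exact le_csSup hbdd (Set.mem_image_of_mem _ hx)
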